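/- arXiv:1810.05601 — 2 statements merged into one kernel-verified Lean document; each statement's English description precedes it below -/
import Mathlib

section
/- Let (ν_n) be a sequence of Borel probability measures on a compact metric space M, each absolutely continuous with respect to a reference probability measure vol, with densities f_n = dν_n/dvol ≥ 0. Suppose ν_n converges weakly to a probability measure ν and write ν = ν_c + ν_s for the Lebesgue decomposition of ν with respect to vol. Suppose further that the push-forward measures τ_n = (f_n)_* ν_n on [0,∞], i.e. τ_n(A) = ν_n(f_n^{-1}(A)), satisfy lim_{K→∞} liminf_{n→∞} τ_n([K,∞]) = 0. Then ν_s = 0, i.e. ν is absolutely continuous with respect to vol. -/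
/-!
On `{fₙ < K}` the density of `νₙ` is below `K`, so for every open `G`,
`νₙ G ≤ K · vol G + τₙ [K, ∞]`. Weak convergence (portmanteau for open sets) passes this to
`ν G ≤ K · vol G + liminf τₙ [K, ∞]`. A `vol`-null set lies in open sets of arbitrarily small
`vol`-measure, so its `ν`-measure is at most `liminf τₙ [K, ∞]` for every `K`, hence zero.
-/

open MeasureTheory Filter Topology
open scoped ENNReal

namespace MeasureTheory

lemma withDensity_le_mul_add_withDensity_setOf_le {M : Type*} [MeasurableSpace M]
    (vol : Measure M) {f : M → ℝ≥0∞} (hf : Measurable f) {G : Set M} (hG : MeasurableSet G)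
    (K : ℝ≥0∞) :
    vol.withDensity f G ≤ K * vol G + vol.withDensity f {x | K ≤ f x} := by
  have hA : MeasurableSet {x | K ≤ f x} := hf measurableSet_Ici
  have below_K : vol.withDensity f (G \ {x | K ≤ f x}) ≤ K * vol G :=
    calc vol.withDensity f (G \ {x | K ≤ f x})
        = ∫⁻ x in G \ {x | K ≤ f x}, f x ∂vol := withDensity_apply f (hG.diff hA)
      _ ≤ ∫⁻ _ in G \ {x | K ≤ f x}, K ∂vol :=
        setLIntegral_mono' (hG.diff hA) fun x hx => (not_le.mp hx.2).le
      _ = K * vol (G \ {x | K ≤ f x}) := setLIntegral_const _ _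
      _ ≤ K * vol G := by gcongr; exact Set.sdiff_subset
  calc vol.withDensity f G
      = vol.withDensity f (G \ {x | K ≤ f x}) + vol.withDensity f (G ∩ {x | K ≤ f x}) := by
        rw [add_comm, measure_inter_add_sdiff G hA]
    _ ≤ K * vol G + vol.withDensity f {x | K ≤ f x} := by
        gcongr
        exact Set.inter_subset_right

lemma ProbabilityMeasure.measure_isOpen_le_mul_add_liminf_of_tendsto {Ω ι : Type*}
    [MeasurableSpace Ω] [TopologicalSpace Ω] [OpensMeasurableSpace Ω] [HasOuterApproxClosed Ω]
    {L : Filter ι} [L.NeBot] (vol : Measure Ω) {μs : ι → ProbabilityMeasure Ω} {μ : ProbabilityMeasure Ω}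
    (hlim : Tendsto μs L (𝓝 μ)) {f : ι → Ω → ℝ≥0∞} (hf : ∀ i, Measurable (f i))
    (hdens : ∀ i, (μs i : Measure Ω) = vol.withDensity (f i)) {G : Set Ω} (hG : IsOpen G)
    (K : ℝ≥0∞) :
    (μ : Measure Ω) G ≤ K * vol G + L.liminf fun i => (μs i : Measure Ω) {x | K ≤ f i x} :=
  calc (μ : Measure Ω) G
      ≤ L.liminf fun i => (μs i : Measure Ω) G :=
        ProbabilityMeasure.le_liminf_measure_open_of_tendsto hlim hG
    _ ≤ L.liminf fun i => K * vol G + (μs i : Measure Ω) {x | K ≤ f i x} :=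
        liminf_le_liminf <| Eventually.of_forall fun i => by
          simpa only [hdens i] using
            withDensity_le_mul_add_withDensity_setOf_le vol (hf i) hG.measurableSet K
    _ = K * vol G + L.liminf fun i => (μs i : Measure Ω) {x | K ≤ f i x} :=
        liminf_const_add L _ _ (by isBoundedDefault) (by isBoundedDefault)

lemma Measure.absolutelyContinuous_of_isOpen_le_mul_add {Ω : Type*} [MeasurableSpace Ω]
    [TopologicalSpace Ω] {μ vol : Measure Ω} [vol.OuterRegular] {c : ℕ → ℝ≥0∞}
    (hc : Tendsto c atTop (𝓝 0)) (h : ∀ (K : ℕ) (G : Set Ω), IsOpen G → μ G ≤ K * vol G + c K) :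
    μ ≪ vol := by
  refine Measure.AbsolutelyContinuous.mk fun s _ hvs => ?_
  have le_c : ∀ K : ℕ, μ s ≤ c K := fun K => by
    refine ENNReal.le_of_forall_pos_le_add fun ε hε _ => ?_
    have hvs_lt : vol s < ε / K := by
      rw [hvs]
      exact ENNReal.div_pos (by exact_mod_cast hε.ne') (ENNReal.natCast_ne_top K)
    obtain ⟨G, hsG, hG, hvG⟩ := s.exists_isOpen_lt_of_lt _ hvs_lt
    calc μ s ≤ μ G := measure_mono hsG
      _ ≤ K * vol G + c K := h K G hG
      _ ≤ ε + c K := by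
        gcongr
        exact (mul_le_mul_right hvG.le _).trans ENNReal.mul_div_le
      _ = c K + ε := add_comm _ _
  exact nonpos_iff_eq_zero.mp (ge_of_tendsto' hc le_c)

end MeasureTheory

theorem no_escape_implies_absolutely_continuous_general
    {M : Type*} [MetricSpace M]
    [MeasurableSpace M] [BorelSpace M]
    (vol : Measure M) [IsProbabilityMeasure vol]
    (νs : ℕ → ProbabilityMeasure M) (ν : ProbabilityMeasure M)
    (f : ℕ → M → ℝ≥0∞) (hf : ∀ n, Measurable (f n))
    (hdens : ∀ n, (νs n : Measure M) = vol.withDensity (f n))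
    (hconv : Tendsto νs atTop (𝓝 ν))
    (τ : ℕ → Measure ℝ≥0∞)
    (hτ : ∀ n, τ n = Measure.map (f n) (νs n : Measure M))
    (hescape : Tendsto
      (fun K : ℕ => atTop.liminf (fun n => τ n (Set.Ici (K : ℝ≥0∞))))
      atTop (𝓝 0)) :
    (ν : Measure M).singularPart vol = 0 := by
  refine Measure.singularPart_eq_zero_of_ac <|
    Measure.absolutelyContinuous_of_isOpen_le_mul_add hescape fun K G hG => ?_
  simpa only [hτ, Measure.map_apply (hf _) measurableSet_Ici, Set.preimage, Set.mem_Ici] using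
    ProbabilityMeasure.measure_isOpen_le_mul_add_liminf_of_tendsto vol hconv hf hdens hG K

/-- If probability measures `νₙ = fₙ·vol` converge weakly to `ν` and the
distributions `τₙ = (fₙ)_* νₙ` of the density values satisfy
`lim_{K→∞} liminf_n τₙ([K,∞]) = 0` (no mass escapes to infinity), then the
singular part of `ν` with respect to `vol` vanishes, i.e. `ν ≪ vol`. -/
theorem no_escape_implies_absolutely_continuous
    {M : Type*} [MetricSpace M] [CompactSpace M]
    [MeasurableSpace M] [BorelSpace M]
    (vol : Measure M) [IsProbabilityMeasure vol]
    (νs : ℕ → ProbabilityMeasure M) (ν : ProbabilityMeasure M)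
    (f : ℕ → M → ℝ≥0∞) (hf : ∀ n, Measurable (f n))
    (hdens : ∀ n, (νs n : Measure M) = vol.withDensity (f n))
    (hconv : Tendsto νs atTop (𝓝 ν))
    (τ : ℕ → Measure ℝ≥0∞)
    (hτ : ∀ n, τ n = Measure.map (f n) (νs n : Measure M))
    (hescape : Tendsto
      (fun K : ℕ => atTop.liminf (fun n => τ n (Set.Ici (K : ℝ≥0∞))))
      atTop (𝓝 0)) :
    (ν : Measure M).singularPart vol = 0 :=
  no_escape_implies_absolutely_continuous_general vol νs ν f hf hdens hconv τ hτ hescape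
end

section
/- Let (ν_n) be Borel probability measures on a compact metric space M with densities f_n ≥ 0 with respect to a probability measure vol, converging weakly to ν = ν_c + ν_s (Lebesgue decomposition with respect to vol), and let τ_n = (f_n)_* ν_n on [0,∞]. Then ν_s(M) ≤ lim_{K→∞} liminf_{n→∞} τ_n([K,∞]). -/
open MeasureTheory Filter Topology
open scoped ENNReal

/-!
The singular part of `ν` lives on a `vol`-null set, which by outer regularity sits inside open
sets `U` of arbitrarily small volume `δ`. By the portmanteau theorem `νₛ(M) ≤ ν(U)` is at most
`liminf νₙ(U)`, and `νₙ(U) ≤ K δ + νₙ{fₙ ≥ K} = K δ + τₙ([K,∞])` since `fₙ < K` on the rest of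
`U`. Letting `δ → 0` gives the bound for each `K`.
-/

namespace MeasureTheory

theorem Measure.MutuallySingular.exists_isOpen_measure_univ_le {α : Type*}
    [MeasurableSpace α] [TopologicalSpace α] {μ vol : Measure α} [vol.OuterRegular]
    (h : μ ⟂ₘ vol) {δ : ℝ≥0∞} (hδ : 0 < δ) :
    ∃ U, IsOpen U ∧ vol U < δ ∧ μ Set.univ ≤ μ U := by
  obtain ⟨U, hnullU, hUopen, hUvol⟩ :=
    Set.exists_isOpen_lt_of_lt h.nullSetᶜ δ (by rwa [h.measure_compl_nullSet])
  refine ⟨U, hUopen, hUvol, ?_⟩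
  calc μ Set.univ ≤ μ h.nullSet + μ h.nullSetᶜ := by
        rw [← Set.union_compl_self h.nullSet]; exact measure_union_le _ _
    _ = μ h.nullSetᶜ := by rw [h.measure_nullSet, zero_add]
    _ ≤ μ U := measure_mono hnullU

theorem withDensity_apply_le_mul_add_withDensity_setOf_le {α : Type*} [MeasurableSpace α]
    (μ : Measure α) {f : α → ℝ≥0∞} (hf : Measurable f) {s : Set α} (hs : MeasurableSet s)
    (c : ℝ≥0∞) :
    μ.withDensity f s ≤ c * μ s + μ.withDensity f {x | c ≤ f x} := by
  have hsplit : s ⊆ (s ∩ {x | f x < c}) ∪ {x | c ≤ f x} := fun x hx => by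
    by_cases h : f x < c
    · exact Or.inl ⟨hx, h⟩
    · exact Or.inr (not_lt.mp h)
  have hlow : μ.withDensity f (s ∩ {x | f x < c}) ≤ c * μ s := by
    have hmeas : MeasurableSet (s ∩ {x | f x < c}) :=
      hs.inter (measurableSet_lt hf measurable_const)
    calc μ.withDensity f (s ∩ {x | f x < c})
        ≤ ∫⁻ _ in s ∩ {x | f x < c}, c ∂μ := by
          rw [withDensity_apply _ hmeas]
          exact setLIntegral_mono' hmeas fun x hx => hx.2.le
      _ ≤ c * μ s := by
          rw [setLIntegral_const]
          exact mul_le_mul_right (measure_mono Set.inter_subset_left) c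
  calc μ.withDensity f s ≤ μ.withDensity f (s ∩ {x | f x < c}) + μ.withDensity f {x | c ≤ f x} :=
        (measure_mono hsplit).trans (measure_union_le _ _)
    _ ≤ c * μ s + μ.withDensity f {x | c ≤ f x} := by gcongr

end MeasureTheory

theorem singular_mass_le_escaping_mass_general
    {M : Type*} [MetricSpace M]
    [MeasurableSpace M] [BorelSpace M]
    (vol : Measure M) [IsProbabilityMeasure vol]
    (νs : ℕ → ProbabilityMeasure M) (ν : ProbabilityMeasure M)
    (f : ℕ → M → ℝ≥0∞) (hf : ∀ n, Measurable (f n))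
    (hdens : ∀ n, (νs n : Measure M) = vol.withDensity (f n))
    (hconv : Tendsto νs atTop (𝓝 ν))
    (τ : ℕ → Measure ℝ≥0∞)
    (hτ : ∀ n, τ n = Measure.map (f n) (νs n : Measure M)) :
    (ν : Measure M).singularPart vol Set.univ ≤
      ⨅ K : ℕ, atTop.liminf (fun n => τ n (Set.Ici (K : ℝ≥0∞))) := by
  refine le_iInf fun K => ENNReal.le_of_forall_pos_le_add fun ε hε _ => ?_
  set δ : ℝ≥0∞ := ε / K
  have hδ : 0 < δ := ENNReal.div_pos (by exact_mod_cast hε.ne') (ENNReal.natCast_ne_top K)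
  obtain ⟨U, hUopen, hUvol, hsingU⟩ :=
    (Measure.mutuallySingular_singularPart (ν : Measure M) vol).exists_isOpen_measure_univ_le hδ
  have hνsU : ∀ n, (νs n : Measure M) U ≤ K * δ + τ n (Set.Ici (K : ℝ≥0∞)) := fun n => by
    rw [hτ n, Measure.map_apply (hf n) measurableSet_Ici, hdens n]
    calc vol.withDensity (f n) U ≤ K * vol U + vol.withDensity (f n) {x | K ≤ f n x} :=
          withDensity_apply_le_mul_add_withDensity_setOf_le vol (hf n) hUopen.measurableSet _
      _ ≤ K * δ + vol.withDensity (f n) {x | K ≤ f n x} := by gcongr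
  calc (ν : Measure M).singularPart vol Set.univ
      ≤ (ν : Measure M) U := hsingU.trans (Measure.singularPart_le _ _ U)
    _ ≤ atTop.liminf fun n => (νs n : Measure M) U :=
        ProbabilityMeasure.le_liminf_measure_open_of_tendsto hconv hUopen
    _ ≤ atTop.liminf fun n => K * δ + τ n (Set.Ici (K : ℝ≥0∞)) :=
        liminf_le_liminf (.of_forall hνsU)
    _ = K * δ + atTop.liminf fun n => τ n (Set.Ici (K : ℝ≥0∞)) :=
        liminf_const_add atTop _ _ (by isBoundedDefault) (by isBoundedDefault)
    _ ≤ _ := by rw [add_comm]; gcongr; exact ENNReal.mul_div_le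

/-- Mass-transport bound: if probability measures `νₙ = fₙ·vol` converge weakly
to `ν` and `τₙ = (fₙ)_* νₙ` are the distributions of the density values, then
the singular part of `ν` with respect to `vol` satisfies
`νₛ(M) ≤ lim_{K→∞} liminf_n τₙ([K,∞])` (the limit over `K` of the antitone
sequence being its infimum). -/
theorem singular_mass_le_escaping_mass
    {M : Type*} [MetricSpace M] [CompactSpace M]
    [MeasurableSpace M] [BorelSpace M]
    (vol : Measure M) [IsProbabilityMeasure vol]
    (νs : ℕ → ProbabilityMeasure M) (ν : ProbabilityMeasure M)
    (f : ℕ → M → ℝ≥0∞) (hf : ∀ n, Measurable (f n))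
    (hdens : ∀ n, (νs n : Measure M) = vol.withDensity (f n))
    (hconv : Tendsto νs atTop (𝓝 ν))
    (τ : ℕ → Measure ℝ≥0∞)
    (hτ : ∀ n, τ n = Measure.map (f n) (νs n : Measure M)) :
    (ν : Measure M).singularPart vol Set.univ ≤
      ⨅ K : ℕ, atTop.liminf (fun n => τ n (Set.Ici (K : ℝ≥0∞))) :=
  singular_mass_le_escaping_mass_general vol νs ν f hf hdens hconv τ hτ
end
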